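/- arXiv:1706.04358 — 3 statements merged into one kernel-verified Lean document; each statement's English description precedes it below -/
import Mathlib

section
/- Let Θ be a nonsingular real antisymmetric n×n matrix, R a real symmetric n×n matrix, M a real m×n matrix, and J a real antisymmetric m×m matrix. Define A = 2Θ(R + MᵀJM), B = 2ΘMᵀ, C = 2JM. Then the physical realizability conditions hold: AΘ + ΘAᵀ + BJBᵀ = 0 and ΘCᵀ + BJ = 0. -/
open Matrix

/-- Physical realizability: with `A = 2Θ(R + MᵀJM)`, `B = 2ΘMᵀ`, `C = 2JM`, where `Θ` is
nonsingular real antisymmetric, `R` symmetric and `J` antisymmetric, one has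
`AΘ + ΘAᵀ + BJBᵀ = 0` and `ΘCᵀ + BJ = 0`. -/
theorem physical_realizability {n m : ℕ}
    (Θ : Matrix (Fin n) (Fin n) ℝ) (hΘ : Θᵀ = -Θ) (hΘinv : IsUnit Θ.det)
    (R : Matrix (Fin n) (Fin n) ℝ) (hR : Rᵀ = R)
    (M : Matrix (Fin m) (Fin n) ℝ)
    (J : Matrix (Fin m) (Fin m) ℝ) (hJ : Jᵀ = -J) :
    letI A : Matrix (Fin n) (Fin n) ℝ := (2 : ℝ) • (Θ * (R + Mᵀ * J * M))
    letI B : Matrix (Fin n) (Fin m) ℝ := (2 : ℝ) • (Θ * Mᵀ)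
    letI C : Matrix (Fin m) (Fin n) ℝ := (2 : ℝ) • (J * M)
    A * Θ + Θ * Aᵀ + B * J * Bᵀ = 0 ∧ Θ * Cᵀ + B * J = 0 := by
  constructor <;>
  · simp only [transpose_smul, transpose_mul, transpose_add, transpose_transpose, hΘ, hR, hJ,
      Matrix.smul_mul, Matrix.mul_smul, smul_smul, Matrix.mul_add, Matrix.add_mul,
      Matrix.neg_mul, Matrix.mul_neg, Matrix.mul_assoc]
    module
end

section
/- Let A = [[A₁, 0],[D, A₂]] be a block lower triangular real Hurwitz matrix and B = [[B₁],[B₂]] a conformally partitioned matrix, and let P = [[P₁, Qᵀ],[Q, P₂]] be the corresponding solution of AP + PAᵀ + BBᵀ = 0 with P₁ invertible. Set T = Q P₁⁻¹, Π = P₂ - T Qᵀ, and B̃₂ = B₂ - T B₁. Then Π satisfies the Lyapunov equation A₂ Π + Π A₂ᵀ + B̃₂ B̃₂ᵀ = 0. -/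
/-!
Write `E₁₁`, `E₂₁`, `E₂₂` for the blocks of `AP + PAᵀ + BBᵀ`. Whenever `T P₁ = Q` and `P₁` is
symmetric, `A₂Π + ΠA₂ᵀ + B̃₂B̃₂ᵀ = E₂₂ - E₂₁Tᵀ - TE₂₁ᵀ + TE₁₁Tᵀ`, which vanishes; this is the
`(2,2)` block of the Lyapunov equation after the congruence by `[[I, 0], [-T, I]]`.
Symmetry of `P₁` comes from `A₁` being Hurwitz: `P₁` and `P₁ᵀ` solve the same Lyapunov
equation, and `A₁X + XA₁ᵀ = 0` forces `X = 0` because `A₁` and `-A₁ᵀ` have disjoint spectra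
(Sylvester's argument: `χ_{A₁}(-A₁ᵀ)` is invertible and `X χ_{A₁}(-A₁ᵀ) = χ_{A₁}(A₁) X = 0`).
-/

open Matrix

/-- A real square matrix is Hurwitz if all eigenvalues (over `ℂ`) have negative real part. -/
def Matrix.IsHurwitz {N : Type*} [Fintype N] [DecidableEq N]
    (A : Matrix N N ℝ) : Prop :=
  ∀ z ∈ spectrum ℂ (A.map (algebraMap ℝ ℂ)), z.re < 0

namespace Matrix

section Sylvester

open Polynomial

variable {m n : Type*} [Fintype m] [DecidableEq m] [Fintype n] [DecidableEq n]

theorem aeval_mul_eq_mul_aeval_of_mul_eq_mul {R : Type*} [CommRing R] {M : Matrix m m R}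
    {N : Matrix n n R} {X : Matrix m n R} (h : M * X = X * N) (p : R[X]) :
    aeval M p * X = X * aeval N p := by
  induction p using Polynomial.induction_on' with
  | add p q hp hq => rw [map_add, map_add, Matrix.add_mul, Matrix.mul_add, hp, hq]
  | monomial k c =>
    have hpow : M ^ k * X = X * N ^ k := by
      induction k with
      | zero => rw [pow_zero, pow_zero, Matrix.one_mul, Matrix.mul_one]
      | succ k ih =>
        rw [pow_succ, Matrix.mul_assoc, h, ← Matrix.mul_assoc, ih, Matrix.mul_assoc, ← pow_succ]
    simp only [aeval_monomial, Algebra.algebraMap_eq_smul_one, smul_mul_assoc, Matrix.one_mul,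
      Matrix.mul_smul, Matrix.smul_mul, hpow]

theorem eq_zero_of_mul_eq_mul_of_disjoint_spectrum {K : Type*} [Field K] [IsAlgClosed K]
    {M : Matrix m m K} {N : Matrix n n K} {X : Matrix m n K}
    (hMN : Disjoint (spectrum K M) (spectrum K N)) (h : M * X = X * N) : X = 0 := by
  cases isEmpty_or_nonempty m
  · exact Subsingleton.elim _ _
  have hdeg : 0 < M.charpoly.degree := by
    rw [charpoly_degree_eq_dim]
    exact_mod_cast Fintype.card_pos
  have hunit : IsUnit (aeval N M.charpoly).det := by
    rw [← isUnit_iff_isUnit_det, ← spectrum.zero_notMem_iff K,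
      spectrum.map_polynomial_aeval_of_degree_pos N _ hdeg]
    rintro ⟨k, hkN, hk⟩
    exact hMN.ne_of_mem (mem_spectrum_iff_isRoot_charpoly.mpr hk) hkN rfl
  calc X = X * aeval N M.charpoly * (aeval N M.charpoly)⁻¹ := by
        rw [Matrix.mul_assoc, mul_nonsing_inv _ hunit, Matrix.mul_one]
    _ = 0 := by
        rw [← aeval_mul_eq_mul_aeval_of_mul_eq_mul h, aeval_self_charpoly, Matrix.zero_mul,
          Matrix.zero_mul]

theorem spectrum_transpose {R : Type*} [CommRing R] (M : Matrix n n R) :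
    spectrum R Mᵀ = spectrum R M := by
  ext z
  rw [mem_spectrum_iff_not_isUnit_eval_charpoly, mem_spectrum_iff_not_isUnit_eval_charpoly,
    charpoly_transpose]

end Sylvester

namespace IsHurwitz

variable {m n : Type*} [Fintype m] [DecidableEq m] [Fintype n] [DecidableEq n]

theorem disjoint_spectrum_neg_transpose {A : Matrix n n ℝ} (hA : A.IsHurwitz) :
    Disjoint (spectrum ℂ (A.map (algebraMap ℝ ℂ)))
      (spectrum ℂ (-(A.map (algebraMap ℝ ℂ))ᵀ)) := by
  rw [← spectrum.neg_eq, spectrum_transpose, Set.disjoint_left]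
  intro z hz hz'
  have hre := hA z hz
  have hre' := hA (-z) hz'
  rw [Complex.neg_re] at hre'
  linarith

theorem eq_zero_of_mul_add_mul_transpose_eq_zero {A X : Matrix n n ℝ} (hA : A.IsHurwitz)
    (h : A * X + X * Aᵀ = 0) : X = 0 := by
  set f := algebraMap ℝ ℂ
  have hX : A.map f * X.map f = X.map f * -(A.map f)ᵀ := by
    rw [Matrix.mul_neg, ← transpose_map, ← RingHom.mapMatrix_apply, ← RingHom.mapMatrix_apply,
      ← RingHom.mapMatrix_apply, ← map_mul, ← map_mul, eq_neg_iff_add_eq_zero, ← map_add, h,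
      map_zero]
  have hX₀ := eq_zero_of_mul_eq_mul_of_disjoint_spectrum hA.disjoint_spectrum_neg_transpose hX
  exact map_injective f.injective (by simpa using hX₀)

theorem transpose_eq_of_lyapunov {A P C : Matrix n n ℝ} (hA : A.IsHurwitz) (hC : Cᵀ = C)
    (h : A * P + P * Aᵀ + C = 0) : Pᵀ = P := by
  have hT : A * Pᵀ + Pᵀ * Aᵀ + C = 0 := by
    simpa [hC, add_comm (A * Pᵀ)] using congrArg transpose h
  have hdiff : A * (Pᵀ - P) + (Pᵀ - P) * Aᵀ = 0 :=
    calc A * (Pᵀ - P) + (Pᵀ - P) * Aᵀ = (A * Pᵀ + Pᵀ * Aᵀ + C) - (A * P + P * Aᵀ + C) := by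
          rw [Matrix.mul_sub, Matrix.sub_mul]; abel
      _ = 0 := by rw [hT, h, sub_zero]
  exact sub_eq_zero.mp (hA.eq_zero_of_mul_add_mul_transpose_eq_zero hdiff)

theorem of_fromBlocks_zero₁₂ {A₁ : Matrix m m ℝ} {A₂ : Matrix n n ℝ} {D : Matrix n m ℝ}
    (hA : (fromBlocks A₁ 0 D A₂).IsHurwitz) : A₁.IsHurwitz := by
  intro z hz
  apply hA z
  rw [mem_spectrum_iff_isRoot_charpoly] at hz ⊢
  rw [fromBlocks_map, Matrix.map_zero _ (map_zero _), charpoly_fromBlocks_zero₁₂,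
    Polynomial.IsRoot, Polynomial.eval_mul, hz, zero_mul]

end IsHurwitz

section Lyapunov

variable {R : Type*} [CommRing R] {k₁ k₂ l : Type*} [Fintype k₁] [Fintype k₂] [Fintype l]

theorem lyapunov_fromBlocks_zero₁₂ {A₁ P₁ : Matrix k₁ k₁ R} {A₂ P₂ : Matrix k₂ k₂ R}
    {D Q : Matrix k₂ k₁ R} {B₁ : Matrix k₁ l R} {B₂ : Matrix k₂ l R}
    (h : fromBlocks A₁ 0 D A₂ * fromBlocks P₁ Qᵀ Q P₂ +
        fromBlocks P₁ Qᵀ Q P₂ * (fromBlocks A₁ 0 D A₂)ᵀ + fromRows B₁ B₂ * (fromRows B₁ B₂)ᵀ = 0) :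
    A₁ * P₁ + P₁ * A₁ᵀ + B₁ * B₁ᵀ = 0 ∧
      D * P₁ + A₂ * Q + Q * A₁ᵀ + B₂ * B₁ᵀ = 0 ∧
      D * Qᵀ + A₂ * P₂ + Q * Dᵀ + P₂ * A₂ᵀ + B₂ * B₂ᵀ = 0 := by
  rw [fromBlocks_transpose, transpose_fromRows, fromBlocks_multiply, fromBlocks_multiply,
    fromRows_mul_fromCols, fromBlocks_add, fromBlocks_add, ← fromBlocks_zero, fromBlocks_inj] at h
  obtain ⟨h₁₁, -, h₂₁, h₂₂⟩ := h
  simp only [transpose_zero, Matrix.zero_mul, Matrix.mul_zero, add_zero] at h₁₁ h₂₁ h₂₂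
  refine ⟨h₁₁, h₂₁, ?_⟩
  rw [← h₂₂]
  abel

theorem lyapunov_schur_complement {A₁ P₁ : Matrix k₁ k₁ R} {A₂ P₂ : Matrix k₂ k₂ R}
    {D Q T : Matrix k₂ k₁ R} {B₁ : Matrix k₁ l R} {B₂ : Matrix k₂ l R}
    (hP₁ : P₁ᵀ = P₁) (hT : T * P₁ = Q)
    (h₁₁ : A₁ * P₁ + P₁ * A₁ᵀ + B₁ * B₁ᵀ = 0)
    (h₂₁ : D * P₁ + A₂ * Q + Q * A₁ᵀ + B₂ * B₁ᵀ = 0)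
    (h₂₂ : D * Qᵀ + A₂ * P₂ + Q * Dᵀ + P₂ * A₂ᵀ + B₂ * B₂ᵀ = 0) :
    A₂ * (P₂ - T * Qᵀ) + (P₂ - T * Qᵀ) * A₂ᵀ + (B₂ - T * B₁) * (B₂ - T * B₁)ᵀ = 0 := by
  subst hT
  calc _ = (D * (T * P₁)ᵀ + A₂ * P₂ + T * P₁ * Dᵀ + P₂ * A₂ᵀ + B₂ * B₂ᵀ)
        - (D * P₁ + A₂ * (T * P₁) + T * P₁ * A₁ᵀ + B₂ * B₁ᵀ) * Tᵀ
        - T * (D * P₁ + A₂ * (T * P₁) + T * P₁ * A₁ᵀ + B₂ * B₁ᵀ)ᵀ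
        + T * (A₁ * P₁ + P₁ * A₁ᵀ + B₁ * B₁ᵀ) * Tᵀ := by
        simp only [transpose_add, transpose_sub, transpose_mul, transpose_transpose, hP₁,
          Matrix.mul_add, Matrix.add_mul, Matrix.mul_sub, Matrix.sub_mul, Matrix.mul_assoc]
        abel
    _ = 0 := by rw [h₁₁, h₂₁, h₂₂]; simp

end Lyapunov

end Matrix

/-- For a block lower triangular Hurwitz matrix `A = [[A₁,0],[D,A₂]]` and conformally
partitioned `B = [[B₁],[B₂]]`, if `P = [[P₁,Qᵀ],[Q,P₂]]` solves `AP + PAᵀ + BBᵀ = 0`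
with `P₁` invertible, then the Schur complement `Π = P₂ - TQᵀ` (with `T = QP₁⁻¹`)
satisfies `A₂Π + ΠA₂ᵀ + B̃₂B̃₂ᵀ = 0`, where `B̃₂ = B₂ - TB₁`. -/
theorem schur_complement_lyapunov {n₁ n₂ m : ℕ}
    (A₁ : Matrix (Fin n₁) (Fin n₁) ℝ) (A₂ : Matrix (Fin n₂) (Fin n₂) ℝ)
    (D : Matrix (Fin n₂) (Fin n₁) ℝ)
    (B₁ : Matrix (Fin n₁) (Fin m) ℝ) (B₂ : Matrix (Fin n₂) (Fin m) ℝ)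
    (P₁ : Matrix (Fin n₁) (Fin n₁) ℝ) (P₂ : Matrix (Fin n₂) (Fin n₂) ℝ)
    (Q : Matrix (Fin n₂) (Fin n₁) ℝ)
    (hA : (Matrix.fromBlocks A₁ 0 D A₂).IsHurwitz)
    (hLyap : (Matrix.fromBlocks A₁ 0 D A₂) * (Matrix.fromBlocks P₁ Qᵀ Q P₂) +
        (Matrix.fromBlocks P₁ Qᵀ Q P₂) * (Matrix.fromBlocks A₁ 0 D A₂)ᵀ +
        (Matrix.fromRows B₁ B₂) * (Matrix.fromRows B₁ B₂)ᵀ = 0)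
    (hP₁ : IsUnit P₁.det) :
    letI T : Matrix (Fin n₂) (Fin n₁) ℝ := Q * P₁⁻¹
    letI Sc : Matrix (Fin n₂) (Fin n₂) ℝ := P₂ - T * Qᵀ
    letI Bt : Matrix (Fin n₂) (Fin m) ℝ := B₂ - T * B₁
    A₂ * Sc + Sc * A₂ᵀ + Bt * Btᵀ = 0 := by
  obtain ⟨h₁₁, h₂₁, h₂₂⟩ := lyapunov_fromBlocks_zero₁₂ hLyap
  have hP₁_symm : P₁ᵀ = P₁ :=
    hA.of_fromBlocks_zero₁₂.transpose_eq_of_lyapunov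
      (by rw [transpose_mul, transpose_transpose]) h₁₁
  have hT : Q * P₁⁻¹ * P₁ = Q := by rw [Matrix.mul_assoc, nonsing_inv_mul _ hP₁, Matrix.mul_one]
  exact lyapunov_schur_complement hP₁_symm hT h₁₁ h₂₁ h₂₂
end

section
/- Let ρ be a 2×2 real symmetric matrix and τ a 2×2 real symmetric positive definite matrix, and for λ > 0 define f_λ(z) = λ / (1 + √(1 + 2λz²)). Then the matrix equation T = (λ/2)(ρ̃ T ρ̃ + I₂)⁻¹, where ρ̃ = τ^{-1/2} ρ τ^{-1/2}, has a unique positive definite symmetric solution T, given by T = f_λ(ρ̃) (functional calculus applied to the symmetric matrix ρ̃). -/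
/-!
Clearing the inverse, a positive definite `T` solves `T = (λ/2)(ρ̃Tρ̃ + I)⁻¹` iff
`Tρ̃Tρ̃ + T = (λ/2) I`. Conjugating by an orthogonal `U` with `ρ̃ = U D Uᵀ`, `D = diag(x₁, x₂)`,
turns this into the same equation for `UᵀTU` and `D`. For a positive definite 2×2 solution of
the diagonal equation the off-diagonal entry vanishes, and each diagonal entry `a` is the
nonnegative root of `x²a² + a = λ/2`, which is `f_λ(x)` (the quadratic formula with the numerator
rationalized). Conversely `f_λ(D)` solves the diagonal equation, which gives existence.
-/

open Matrix

/-- The scalar function `f_λ(z) = λ / (1 + √(1 + 2λz²))`. -/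
noncomputable def fLam (lam z : ℝ) : ℝ :=
  lam / (1 + Real.sqrt (1 + 2 * lam * z ^ 2))

lemma fLam_pos {lam : ℝ} (hlam : 0 < lam) (z : ℝ) : 0 < fLam lam z := by
  unfold fLam
  positivity

lemma sq_mul_fLam_sq_add_fLam {lam : ℝ} (hlam : 0 ≤ lam) (z : ℝ) :
    z ^ 2 * fLam lam z ^ 2 + fLam lam z = lam / 2 := by
  have hs := Real.sq_sqrt (show 0 ≤ 1 + 2 * lam * z ^ 2 by positivity)
  unfold fLam
  set s := Real.sqrt (1 + 2 * lam * z ^ 2)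
  have : 0 < 1 + s := by positivity
  field_simp
  linear_combination -lam * hs

lemma eq_fLam_of_sq_mul_sq_add {lam z a : ℝ} (hlam : 0 ≤ lam) (ha : 0 ≤ a)
    (h : z ^ 2 * a ^ 2 + a = lam / 2) : a = fLam lam z := by
  have hf := sq_mul_fLam_sq_add_fLam hlam z
  have hf0 : 0 ≤ fLam lam z := by unfold fLam; positivity
  have hfactor : (a - fLam lam z) * (z ^ 2 * (a + fLam lam z) + 1) = 0 := by
    linear_combination h - hf
  have : 0 < z ^ 2 * (a + fLam lam z) + 1 := by positivity
  linarith [(mul_eq_zero.mp hfactor).resolve_right this.ne']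

open Unitary
open scoped ComplexOrder

section

variable {n : Type*} [Fintype n] [DecidableEq n]

lemma diagonal_fLam_riccati {lam : ℝ} (hlam : 0 ≤ lam) (d : n → ℝ) :
    diagonal (fLam lam ∘ d) * diagonal d * diagonal (fLam lam ∘ d) * diagonal d
      + diagonal (fLam lam ∘ d) = (lam / 2) • 1 := by
  simp only [diagonal_mul_diagonal, diagonal_add, smul_one_eq_diagonal, Function.comp_apply]
  congr 1
  funext i
  linear_combination sq_mul_fLam_sq_add_fLam hlam (d i)

lemma eq_smul_nonsing_inv_iff {α : Type*} [CommRing α] {M T : Matrix n n α}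
    (hM : IsUnit M.det) (c : α) : T = c • M⁻¹ ↔ T * M = c • 1 := by
  constructor
  · rintro rfl
    rw [smul_mul, nonsing_inv_mul _ hM]
  · intro h
    rw [← mul_nonsing_inv_cancel_right M T hM, h, smul_mul, one_mul]

lemma posDef_conjStarAlgAut_iff {R : Type*} [CommRing R] [PartialOrder R] [StarRing R]
    (u : unitaryGroup n R) {X : Matrix n n R} :
    (conjStarAlgAut R _ u X).PosDef ↔ X.PosDef :=
  IsUnit.posDef_star_right_conjugate_iff isUnit_coe

lemma eq_smul_inv_mul_mul_add_one_iff {𝕜 : Type*} [RCLike 𝕜] {A T : Matrix n n 𝕜}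
    (hA : A.IsHermitian) (hT : T.PosSemidef) (c : 𝕜) :
    T = c • (A * T * A + 1)⁻¹ ↔ T * A * T * A + T = c • 1 := by
  have hATA : (A * T * A).PosSemidef := by
    simpa only [hA.eq] using hT.mul_mul_conjTranspose_same A
  have hunit : IsUnit (A * T * A + 1).det :=
    (isUnit_iff_isUnit_det _).mp (PosDef.posSemidef_add hATA PosDef.one).isUnit
  rw [eq_smul_nonsing_inv_iff hunit, mul_add, mul_one, ← mul_assoc, ← mul_assoc]

lemma riccati_solution_iff {A T : Matrix n n ℝ} (hA : A.IsHermitian) (c : ℝ) :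
    (Tᵀ = T ∧ T.PosDef ∧ T = c • (A * T * A + 1)⁻¹) ↔ T.PosDef ∧ T * A * T * A + T = c • 1 := by
  constructor
  · rintro ⟨-, hT, h⟩
    exact ⟨hT, (eq_smul_inv_mul_mul_add_one_iff hA hT.posSemidef c).mp h⟩
  · rintro ⟨hT, h⟩
    exact ⟨by simpa using hT.isHermitian.eq, hT,
      (eq_smul_inv_mul_mul_add_one_iff hA hT.posSemidef c).mpr h⟩

lemma riccati_conjStarAlgAut_diagonal_fLam {lam : ℝ} (hlam : 0 ≤ lam) (u : unitaryGroup n ℝ)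
    (d : n → ℝ) :
    let φ := conjStarAlgAut ℝ _ u
    φ (diagonal (fLam lam ∘ d)) * φ (diagonal d) * φ (diagonal (fLam lam ∘ d)) * φ (diagonal d)
      + φ (diagonal (fLam lam ∘ d)) = (lam / 2) • 1 := by
  simp only [← map_mul, ← map_add, diagonal_fLam_riccati hlam, map_smul, map_one]

lemma posDef_conjStarAlgAut_diagonal_fLam {lam : ℝ} (hlam : 0 < lam) (u : unitaryGroup n ℝ)
    (d : n → ℝ) : (conjStarAlgAut ℝ _ u (diagonal (fLam lam ∘ d))).PosDef := by
  rw [posDef_conjStarAlgAut_iff, posDef_diagonal_iff]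
  exact fun i => fLam_pos hlam (d i)

lemma exists_conjStarAlgAut_eq_of_mul_transpose_eq_one {U : Matrix n n ℝ} (hU : U * Uᵀ = 1) :
    ∃ u : unitaryGroup n ℝ, ∀ X, conjStarAlgAut ℝ _ u X = U * X * Uᵀ := by
  have hstar : star U = Uᵀ := by rw [star_eq_conjTranspose, conjTranspose_eq_transpose_of_trivial]
  exact ⟨⟨U, mem_unitaryGroup_iff.mpr (hstar ▸ hU)⟩, fun X => by simp [hstar]⟩

end

lemma eq_diagonal_fLam_of_riccati {lam : ℝ} (hlam : 0 ≤ lam) {T : Matrix (Fin 2) (Fin 2) ℝ}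
    (hT : T.PosDef) {d : Fin 2 → ℝ}
    (h : T * diagonal d * T * diagonal d + T = (lam / 2) • 1) :
    T = diagonal (fLam lam ∘ d) := by
  have hsymm : T 1 0 = T 0 1 := by simpa using congrFun (congrFun hT.isHermitian.eq 0) 1
  have hdiag (i : Fin 2) : 0 < T i i := hT.diag_pos
  have e00 := congrFun (congrFun h 0) 0
  have e01 := congrFun (congrFun h 0) 1
  have e10 := congrFun (congrFun h 1) 0
  have e11 := congrFun (congrFun h 1) 1
  simp only [Matrix.add_apply, mul_apply, Fin.sum_univ_two, diagonal_apply_eq, ne_eq, one_ne_zero,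
    zero_ne_one, not_false_eq_true, diagonal_apply_ne, mul_zero, add_zero, zero_add, hsymm,
    Matrix.smul_apply, one_apply_eq, one_apply_ne, smul_eq_mul, mul_one] at e00 e01 e10 e11
  -- `d₀ e₀₁ - d₁ e₁₀` reads `T₀₁ (d₀ - d₁) = 0`; if `d₀ = d₁`, `T₀₁` has a positive cofactor in `e₀₁`
  have hoff : T 0 1 = 0 := by
    have hgap : T 0 1 * (d 0 - d 1) = 0 := by linear_combination d 0 * e01 - d 1 * e10
    rcases mul_eq_zero.mp hgap with hb | hd
    · exact hb
    have hpos : 0 < T 0 0 * d 1 ^ 2 + T 1 1 * d 1 ^ 2 + 1 := by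
      nlinarith [hdiag 0, hdiag 1, sq_nonneg (d 1)]
    refine (mul_eq_zero.mp (?_ : T 0 1 * (T 0 0 * d 1 ^ 2 + T 1 1 * d 1 ^ 2 + 1) = 0)).resolve_right
      hpos.ne'
    rw [sub_eq_zero.mp hd] at e01
    linear_combination e01
  have h0 : T 0 0 = fLam lam (d 0) :=
    eq_fLam_of_sq_mul_sq_add hlam (hdiag 0).le (by rw [hoff] at e00; linear_combination e00)
  have h1 : T 1 1 = fLam lam (d 1) :=
    eq_fLam_of_sq_mul_sq_add hlam (hdiag 1).le (by rw [hoff] at e11; linear_combination e11)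
  ext i j
  fin_cases i <;> fin_cases j <;> simp [h0, h1, hoff, hsymm]

lemma eq_conjStarAlgAut_diagonal_fLam_of_riccati {lam : ℝ} (hlam : 0 ≤ lam)
    (u : unitaryGroup (Fin 2) ℝ) (d : Fin 2 → ℝ) {T : Matrix (Fin 2) (Fin 2) ℝ} (hT : T.PosDef)
    (h : T * conjStarAlgAut ℝ _ u (diagonal d) * T * conjStarAlgAut ℝ _ u (diagonal d) + T =
      (lam / 2) • 1) :
    T = conjStarAlgAut ℝ _ u (diagonal (fLam lam ∘ d)) := by
  set φ := conjStarAlgAut ℝ _ u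
  have hT' : (φ.symm T).PosDef :=
    (posDef_conjStarAlgAut_iff u).mp (by rwa [StarAlgEquiv.apply_symm_apply])
  have h' := congrArg φ.symm h
  simp only [map_add, map_mul, map_smul, map_one, StarAlgEquiv.symm_apply_apply] at h'
  rw [← eq_diagonal_fLam_of_riccati hlam hT' h', StarAlgEquiv.apply_symm_apply]

theorem riccati_type_unique_solution_general
    (ρ : Matrix (Fin 2) (Fin 2) ℝ) (hρ : ρᵀ = ρ)
    (lam : ℝ) (hlam : 0 < lam)
    (S : Matrix (Fin 2) (Fin 2) ℝ) (hSsym : Sᵀ = S) :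
    letI ρt : Matrix (Fin 2) (Fin 2) ℝ := S * ρ * S
    (∃! T : Matrix (Fin 2) (Fin 2) ℝ,
      Tᵀ = T ∧ T.PosDef ∧ T = (lam / 2) • (ρt * T * ρt + 1)⁻¹) ∧
    (∀ T : Matrix (Fin 2) (Fin 2) ℝ,
      (Tᵀ = T ∧ T.PosDef ∧ T = (lam / 2) • (ρt * T * ρt + 1)⁻¹) →
      ∀ (U : Matrix (Fin 2) (Fin 2) ℝ) (x₁ x₂ : ℝ),
        U * Uᵀ = 1 → ρt = U * Matrix.diagonal ![x₁, x₂] * Uᵀ →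
        T = U * Matrix.diagonal ![fLam lam x₁, fLam lam x₂] * Uᵀ) := by
  set A := S * ρ * S
  have hA : A.IsHermitian := by
    simp [A, IsHermitian, transpose_mul, hρ, hSsym, Matrix.mul_assoc]
  simp_rw [riccati_solution_iff hA]
  obtain ⟨u, d, hAu⟩ : ∃ (u : unitaryGroup (Fin 2) ℝ) (d : Fin 2 → ℝ),
      A = conjStarAlgAut ℝ _ u (diagonal d) :=
    ⟨hA.eigenvectorUnitary, hA.eigenvalues, by
      simpa [RCLike.ofReal_real_eq_id] using hA.spectral_theorem⟩
  refine ⟨⟨_, ⟨posDef_conjStarAlgAut_diagonal_fLam hlam u d,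
    hAu ▸ riccati_conjStarAlgAut_diagonal_fLam hlam.le u d⟩,
    fun T ⟨hT, h⟩ => eq_conjStarAlgAut_diagonal_fLam_of_riccati hlam.le u d hT (hAu ▸ h)⟩, ?_⟩
  rintro T ⟨hT, h⟩ U x₁ x₂ hU hAU
  obtain ⟨v, hv⟩ := exists_conjStarAlgAut_eq_of_mul_transpose_eq_one hU
  have hf : ![fLam lam x₁, fLam lam x₂] = fLam lam ∘ ![x₁, x₂] := by ext i; fin_cases i <;> rfl
  rw [← hv] at hAU
  rw [hf, ← hv]
  exact eq_conjStarAlgAut_diagonal_fLam_of_riccati hlam.le v _ hT (hAU ▸ h)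

/-- For 2×2 real symmetric `ρ`, positive definite `τ`, and `λ > 0`, the equation
`T = (λ/2)(ρ̃Tρ̃ + I)⁻¹` with `ρ̃ = τ^{-1/2}ρτ^{-1/2}` has a unique positive definite
symmetric solution, given by `T = f_λ(ρ̃)` in the sense of functional calculus on
spectral decompositions of `ρ̃`. -/
theorem riccati_type_unique_solution
    (ρ τ : Matrix (Fin 2) (Fin 2) ℝ) (hρ : ρᵀ = ρ) (hτ : τᵀ = τ) (hτpd : τ.PosDef)
    (lam : ℝ) (hlam : 0 < lam)
    (S : Matrix (Fin 2) (Fin 2) ℝ) (hSsym : Sᵀ = S) (hSpd : S.PosDef)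
    (hSsq : S * S = τ⁻¹) :
    letI ρt : Matrix (Fin 2) (Fin 2) ℝ := S * ρ * S
    (∃! T : Matrix (Fin 2) (Fin 2) ℝ,
      Tᵀ = T ∧ T.PosDef ∧ T = (lam / 2) • (ρt * T * ρt + 1)⁻¹) ∧
    (∀ T : Matrix (Fin 2) (Fin 2) ℝ,
      (Tᵀ = T ∧ T.PosDef ∧ T = (lam / 2) • (ρt * T * ρt + 1)⁻¹) →
      ∀ (U : Matrix (Fin 2) (Fin 2) ℝ) (x₁ x₂ : ℝ),
        U * Uᵀ = 1 → ρt = U * Matrix.diagonal ![x₁, x₂] * Uᵀ →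
        T = U * Matrix.diagonal ![fLam lam x₁, fLam lam x₂] * Uᵀ) :=
  riccati_type_unique_solution_general ρ hρ lam hlam S hSsym
end
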